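/- Let (D,K,T) be an MD-RSPP instance and let S = {s : (s,t) ∈ K} be the set of sources of commodities. If H is a solution graph of (D,K,T), then there exists a solution graph H' of (D,K,T) with V(H') = V(H) such that the outdegree of every vertex in H' is at most its outdegree in H and every strongly connected component of H' containing at least two vertices contains a vertex of S. -/

import Mathlib

open Relation

variable {V : Type*} [DecidableEq V]

/-- The adjacency relation of a digraph given by its edge set. -/
def Adj (E : Finset (V × V)) : V → V → Prop := fun a b => (a, b) ∈ E

/-- `D` is a digraph: no self-loops (no parallel edges since edges form a set). -/
def IsDigraph (D : Finset (V × V)) : Prop := ∀ e ∈ D, e.1 ≠ e.2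

/-- `l` is a directed `s`-`t`-path w.r.t. the adjacency relation `A`:
a nonempty duplicate-free list of vertices, consecutive ones adjacent,
starting at `s` and ending at `t`. -/
def DiPath (A : V → V → Prop) (s t : V) (l : List V) : Prop :=
  l.Chain' A ∧ l.Nodup ∧ l.head? = some s ∧ l.getLast? = some t

/-- Adjacency in the transitive closure `T(D)` of the digraph with edge set `E`:
`(u,v)` is an edge iff `u ≠ v` and `v` is reachable from `u` in `E`. -/
def TCAdj (E : Finset (V × V)) (u v : V) : Prop :=
  u ≠ v ∧ Relation.ReflTransGen (Adj E) u v

/-- The outdegree of `v` in the digraph with edge set `H`. -/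
def outDeg (H : Finset (V × V)) (v : V) : ℕ :=
  (H.filter fun e => e.1 = v).card

/-- The list of (directed) edges traversed by a list of vertices. -/
def listEdges (l : List V) : List (V × V) := l.zip l.tail

/-- `H` is a solution graph of the MD-RSPP instance `(D,K,T)`: a subgraph of
`T(D)` of maximum outdegree at most `T` containing a directed `s`-`t`-path for
every commodity `(s,t) ∈ K`. -/
def RSPPSolution (D K : Finset (V × V)) (T : ℕ) (H : Finset (V × V)) : Prop :=
  (∀ e ∈ H, TCAdj D e.1 e.2) ∧ (∀ v, outDeg H v ≤ T) ∧
  (∀ k ∈ K, ∃ l, DiPath (Adj H) k.1 k.2 l)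

/-!
A strongly connected component `C` with at least two vertices and no source can be flattened:
list `C` as `a = c₀, c₁, …, cₘ`, replace the edges ending inside `C` by the path
`c₀ → c₁ → ⋯ → cₘ` and by one edge `(w, a)` for every outside vertex `w` that had an edge into `C`.
A commodity path starts outside `C`, so it can still enter `C` at `a` and follow the path to
wherever it left `C`. Each vertex of `C` trades its (at least one) internal out-edges for at most
one path edge, and each outside vertex its edges into `C` for at most one edge to `a`. The new
reachability relation is contained in the old one and the path cannot be walked backwards, so
reachability strictly shrinks; on a finite vertex set the flattening therefore terminates.
-/

section Paths

variable {α : Type*}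

theorem listEdges_cons_cons (a b : α) (l : List α) :
    listEdges (a :: b :: l) = (a, b) :: listEdges (b :: l) := rfl

theorem mem_of_mem_listEdges {l : List α} {a b : α} (h : (a, b) ∈ listEdges l) :
    a ∈ l ∧ b ∈ l :=
  ⟨(List.of_mem_zip h).1, List.mem_of_mem_tail (List.of_mem_zip h).2⟩

theorem idxOf_snd_of_mem_listEdges [DecidableEq α] : ∀ {l : List α}, l.Nodup → ∀ {a b : α},
    (a, b) ∈ listEdges l → l.idxOf b = l.idxOf a + 1
  | [], _, _, _, h => by simp [listEdges] at h
  | [_], _, _, _, h => by simp [listEdges] at h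
  | x :: y :: m, hnd, a, b, h => by
    rw [listEdges_cons_cons, List.mem_cons] at h
    obtain ⟨hx, hnd⟩ := List.nodup_cons.1 hnd
    rcases h with h | h
    · obtain ⟨rfl, rfl⟩ := Prod.mk.inj h
      rw [List.idxOf_cons_self, List.idxOf_cons_ne _ (by rintro rfl; simp at hx),
        List.idxOf_cons_self]
    · obtain ⟨ha, hb⟩ := mem_of_mem_listEdges h
      rw [List.idxOf_cons_ne _ (ne_of_mem_of_not_mem ha hx).symm,
        List.idxOf_cons_ne _ (ne_of_mem_of_not_mem hb hx).symm, idxOf_snd_of_mem_listEdges hnd h]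

theorem ne_of_mem_listEdges [DecidableEq α] {l : List α} (hl : l.Nodup) {a b : α}
    (h : (a, b) ∈ listEdges l) : a ≠ b := by
  rintro rfl
  simpa using idxOf_snd_of_mem_listEdges hl h

theorem eq_of_mem_listEdges [DecidableEq α] {l : List α} (hl : l.Nodup) {a b c : α}
    (hb : (a, b) ∈ listEdges l) (hc : (a, c) ∈ listEdges l) : b = c := by
  rw [← List.idxOf_inj (mem_of_mem_listEdges hb).2, idxOf_snd_of_mem_listEdges hl hb,
    idxOf_snd_of_mem_listEdges hl hc]

theorem reflTransGen_listEdges_of_mem : ∀ {a : α} {l : List α} {x : α}, x ∈ a :: l →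
    ReflTransGen (fun y z => (y, z) ∈ listEdges (a :: l)) a x
  | a, [], x, hx => by rw [List.mem_singleton.1 hx]
  | a, b :: l, x, hx => by
    rcases List.mem_cons.1 hx with rfl | hx
    · rfl
    · exact .head List.mem_cons_self
        (ReflTransGen.mono (fun _ _ => List.mem_cons_of_mem _) _ _
          (reflTransGen_listEdges_of_mem hx))

theorem exists_mem_listEdges_of_mem_tail : ∀ {a : α} {l : List α} {x : α}, x ∈ l →
    ∃ y, (y, x) ∈ listEdges (a :: l)
  | _, [], _, hx => by simp at hx
  | a, b :: l, x, hx => by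
    rcases List.mem_cons.1 hx with rfl | hx
    · exact ⟨a, List.mem_cons_self⟩
    · obtain ⟨y, hy⟩ := exists_mem_listEdges_of_mem_tail (a := b) hx
      exact ⟨y, List.mem_cons_of_mem _ hy⟩

theorem exists_mem_listEdges_of_mem {a : α} {l : List α} (hl : l ≠ []) {x : α}
    (hx : x ∈ a :: l) : ∃ e ∈ listEdges (a :: l), e.1 = x ∨ e.2 = x := by
  rcases List.mem_cons.1 hx with rfl | hx
  · obtain ⟨b, m, rfl⟩ := List.exists_cons_of_ne_nil hl
    exact ⟨(x, b), List.mem_cons_self, Or.inl rfl⟩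
  · obtain ⟨y, hy⟩ := exists_mem_listEdges_of_mem_tail (a := a) hx
    exact ⟨(y, x), hy, Or.inr rfl⟩

theorem DiPath.reflTransGen {R : α → α → Prop} {s t : α} {l : List α} (h : DiPath R s t l) :
    ReflTransGen R s t := by
  obtain ⟨hch, -, hs, ht⟩ := h
  obtain ⟨m, rfl⟩ := List.head?_eq_some_iff.1 hs
  exact List.relationReflTransGen_of_exists_isChain_cons m hch
    (Option.some_injective _ (by rw [← List.getLast?_eq_some_getLast, ht]))

theorem exists_diPath_of_reflTransGen {R : α → α → Prop} {s t : α} (h : ReflTransGen R s t) :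
    ∃ l, DiPath R s t l := by
  induction h using ReflTransGen.head_induction_on with
  | refl => exact ⟨[t], List.isChain_singleton t, List.nodup_singleton t, rfl, rfl⟩
  | @head a b hab _ ih =>
    obtain ⟨l, hch, hnd, hb, ht⟩ := ih
    by_cases ha : a ∈ l
    · obtain ⟨l₁, l₂, rfl⟩ := List.append_of_mem ha
      refine ⟨a :: l₂, hch.suffix ⟨l₁, rfl⟩, hnd.sublist (List.sublist_append_right _ _),
        rfl, ?_⟩
      rwa [List.getLast?_append_of_ne_nil _ (List.cons_ne_nil _ _)] at ht
    · obtain ⟨m, rfl⟩ := List.head?_eq_some_iff.1 hb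
      exact ⟨a :: b :: m, hch.cons_cons hab, List.nodup_cons.2 ⟨ha, hnd⟩, rfl,
        by rwa [List.getLast?_cons_cons]⟩

end Paths

def ListsSCC (H : Finset (V × V)) (a : V) (p : List V) : Prop :=
  ∀ x, x ∈ p ↔ ReflTransGen (Adj H) x a ∧ ReflTransGen (Adj H) a x

section Reroute

variable {H : Finset (V × V)} {a : V} {l : List V}

def reroute (H : Finset (V × V)) (a : V) (l : List V) : Finset (V × V) :=
  H.filter (fun e => e.2 ∉ a :: l) ∪ (listEdges (a :: l)).toFinset ∪
    (H.filter fun e => e.1 ∉ a :: l ∧ e.2 ∈ a :: l).image fun e => (e.1, a)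

theorem mem_reroute {x y : V} :
    (x, y) ∈ reroute H a l ↔ ((x, y) ∈ H ∧ y ∉ a :: l) ∨ (x, y) ∈ listEdges (a :: l) ∨
      (x ∉ a :: l ∧ y = a ∧ ∃ c ∈ a :: l, (x, c) ∈ H) := by
  simp only [reroute, Finset.mem_union, Finset.mem_filter, List.mem_toFinset, Finset.mem_image,
    Prod.exists, Prod.mk.injEq]
  constructor
  · rintro ((h | h) | ⟨x', c, ⟨hc, hx', hcp⟩, rfl, rfl⟩)
    · exact .inl h
    · exact .inr (.inl h)
    · exact .inr (.inr ⟨hx', rfl, c, hcp, hc⟩)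
  · rintro (h | h | ⟨hx, rfl, c, hcp, hc⟩)
    · exact .inl (.inl h)
    · exact .inl (.inr h)
    · exact .inr ⟨x, c, ⟨hc, hx, hcp⟩, rfl, rfl⟩

theorem mem_listEdges_of_mem_reroute {x y : V} (h : (x, y) ∈ reroute H a l)
    (hx : x ∈ a :: l) (hy : y ∈ a :: l) : (x, y) ∈ listEdges (a :: l) := by
  rcases mem_reroute.1 h with ⟨-, hy'⟩ | h | ⟨hx', -⟩
  exacts [absurd hy hy', h, absurd hx hx']

theorem exists_mem_of_mem_reroute {x y : V} (h : (x, y) ∈ reroute H a l)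
    (hx : x ∉ a :: l) (hy : y ∈ a :: l) : y = a ∧ ∃ c ∈ a :: l, (x, c) ∈ H := by
  rcases mem_reroute.1 h with ⟨-, hy'⟩ | h | ⟨-, h⟩
  exacts [absurd hy hy', absurd (mem_of_mem_listEdges h).1 hx, h]

theorem reflTransGen_reroute_of_not_mem {x y : V} (hxy : ReflTransGen (Adj H) x y)
    (hx : x ∉ a :: l) : ReflTransGen (Adj (reroute H a l)) x y := by
  have hpath : ∀ z ∈ a :: l, ReflTransGen (Adj (reroute H a l)) a z := fun z hz =>
    ReflTransGen.mono (fun _ _ h => mem_reroute.2 (.inr (.inl h))) _ _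
      (reflTransGen_listEdges_of_mem hz)
  -- inside the component, the path from `a` replaces whatever prefix the walk had
  suffices key : ∀ x, ReflTransGen (Adj H) x y →
      ReflTransGen (Adj (reroute H a l)) (if x ∈ a :: l then a else x) y by
    simpa [hx] using key x hxy
  intro x hxy
  induction hxy using ReflTransGen.head_induction_on with
  | refl => split_ifs with hy; exacts [hpath y hy, .refl]
  | @head x c hxc _ ih =>
    by_cases hc : c ∈ a :: l
    · rw [if_pos hc] at ih
      split_ifs with hx
      · exact ih
      · exact .head (mem_reroute.2 (.inr (.inr ⟨hx, rfl, c, hc, hxc⟩))) ih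
    · rw [if_neg hc] at ih
      have hxc' : Adj (reroute H a l) x c := mem_reroute.2 (.inl ⟨hxc, hc⟩)
      split_ifs with hx
      · exact (hpath x hx).trans (.head hxc' ih)
      · exact .head hxc' ih

theorem reflTransGen_reroute_le (hp : ListsSCC H a (a :: l)) :
    ReflTransGen (Adj (reroute H a l)) ≤ ReflTransGen (Adj H) :=
  reflTransGen_closed fun x y hxy => by
    rcases mem_reroute.1 hxy with ⟨h, -⟩ | h | ⟨-, rfl, c, hc, hxc⟩
    · exact .single h
    · obtain ⟨hx, hy⟩ := mem_of_mem_listEdges h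
      exact ((hp x).1 hx).1.trans ((hp y).1 hy).2
    · exact .head hxc ((hp c).1 hc).1

theorem idxOf_le_of_reflTransGen_reroute (hp : ListsSCC H a (a :: l)) (hnd : (a :: l).Nodup)
    {x y : V} (hxy : ReflTransGen (Adj (reroute H a l)) x y)
    (hx : x ∈ a :: l) (hyx : ReflTransGen (Adj H) y x) :
    y ∈ a :: l ∧ (a :: l).idxOf x ≤ (a :: l).idxOf y := by
  induction hxy using ReflTransGen.head_induction_on with
  | refl => exact ⟨hx, le_rfl⟩
  | @head x z hxz hzy ih =>
    have hxz' := reflTransGen_reroute_le hp _ _ (.single hxz)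
    have hz : z ∈ a :: l := (hp z).2
      ⟨((reflTransGen_reroute_le hp _ _ hzy).trans hyx).trans ((hp x).1 hx).1,
        ((hp x).1 hx).2.trans hxz'⟩
    obtain ⟨hy, hle⟩ := ih hz (hyx.trans hxz')
    have := idxOf_snd_of_mem_listEdges hnd (mem_listEdges_of_mem_reroute hxz hx hz)
    exact ⟨hy, by omega⟩

theorem reflTransGen_reroute_lt (hp : ListsSCC H a (a :: l)) (hnd : (a :: l).Nodup)
    (hl : l ≠ []) : ReflTransGen (Adj (reroute H a l)) < ReflTransGen (Adj H) := by
  obtain ⟨b, m, rfl⟩ := List.exists_cons_of_ne_nil hl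
  have hba : b ≠ a := fun h => (List.nodup_cons.1 hnd).1 (h ▸ List.mem_cons_self)
  have hb : b ∈ a :: b :: m := List.mem_cons_of_mem _ List.mem_cons_self
  refine lt_of_le_not_ge (reflTransGen_reroute_le hp) fun hle => ?_
  have hidx := (idxOf_le_of_reflTransGen_reroute hp hnd (hle b a ((hp b).1 hb).1) hb
    ((hp b).1 hb).2).2
  rw [List.idxOf_cons_self, List.idxOf_cons_ne _ hba.symm] at hidx
  omega

theorem exists_mem_adj_of_mem (hp : ListsSCC H a (a :: l)) (hnd : (a :: l).Nodup)
    (hl : l ≠ []) {x : V} (hx : x ∈ a :: l) : ∃ c ∈ a :: l, (x, c) ∈ H := by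
  obtain ⟨b, hb, hbx⟩ : ∃ b ∈ a :: l, b ≠ x := by
    obtain ⟨b, m, rfl⟩ := List.exists_cons_of_ne_nil hl
    by_cases hxa : x = a
    · exact ⟨b, List.mem_cons_of_mem _ List.mem_cons_self,
        fun h => (List.nodup_cons.1 hnd).1 (h ▸ hxa ▸ List.mem_cons_self)⟩
    · exact ⟨a, List.mem_cons_self, Ne.symm hxa⟩
  rcases (((hp x).1 hx).1.trans ((hp b).1 hb).2).cases_head with rfl | ⟨z, hxz, hzb⟩
  · exact absurd rfl hbx
  · exact ⟨z, (hp z).2 ⟨hzb.trans ((hp b).1 hb).1, ((hp x).1 hx).2.tail hxz⟩, hxz⟩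

theorem outDeg_eq_card_add_card (H : Finset (V × V)) (v : V) (P : V → Prop) [DecidablePred P] :
    outDeg H v = (H.filter fun e => e.1 = v ∧ P e.2).card +
      (H.filter fun e => e.1 = v ∧ ¬P e.2).card := by
  rw [outDeg, ← Finset.card_filter_add_card_filter_not (fun e => P e.2), Finset.filter_filter,
    Finset.filter_filter]

theorem outDeg_reroute_le (hp : ListsSCC H a (a :: l)) (hnd : (a :: l).Nodup) (hl : l ≠ [])
    (v : V) : outDeg (reroute H a l) v ≤ outDeg H v := by
  have hout : (reroute H a l).filter (fun e => e.1 = v ∧ e.2 ∉ a :: l) =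
      H.filter (fun e => e.1 = v ∧ e.2 ∉ a :: l) := by
    ext ⟨x, y⟩
    simp only [Finset.mem_filter, and_congr_left_iff, and_imp]
    intro _ hy
    refine ⟨fun h => ?_, fun h => mem_reroute.2 (.inl ⟨h, hy⟩)⟩
    rcases mem_reroute.1 h with ⟨h, -⟩ | h | ⟨-, rfl, -⟩
    exacts [h, absurd (mem_of_mem_listEdges h).2 hy, absurd List.mem_cons_self hy]
  -- the new edges from `v` into the component all go to the path successor of `v`, or to `a`
  have hin_le_one : ((reroute H a l).filter fun e => e.1 = v ∧ e.2 ∈ a :: l).card ≤ 1 := by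
    refine Finset.card_le_one.2 ?_
    simp only [Finset.mem_filter]
    rintro ⟨x, y⟩ ⟨he, hxv, hy⟩ ⟨x', y'⟩ ⟨he', hxv', hy'⟩
    dsimp only at hxv hxv' hy hy'
    rw [hxv] at he
    rw [hxv'] at he'
    refine Prod.ext (hxv.trans hxv'.symm) ?_
    by_cases hv : v ∈ a :: l
    · exact eq_of_mem_listEdges hnd (mem_listEdges_of_mem_reroute he hv hy)
        (mem_listEdges_of_mem_reroute he' hv hy')
    · exact (exists_mem_of_mem_reroute he hv hy).1.trans
        (exists_mem_of_mem_reroute he' hv hy').1.symm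
  have hin_pos : ((reroute H a l).filter fun e => e.1 = v ∧ e.2 ∈ a :: l).Nonempty →
      (H.filter fun e => e.1 = v ∧ e.2 ∈ a :: l).Nonempty := by
    rintro ⟨⟨x, y⟩, he⟩
    obtain ⟨he, hxv, hy⟩ := Finset.mem_filter.1 he
    dsimp only at hxv hy
    rw [hxv] at he
    obtain ⟨c, hc, hvc⟩ : ∃ c ∈ a :: l, (v, c) ∈ H := by
      by_cases hv : v ∈ a :: l
      exacts [exists_mem_adj_of_mem hp hnd hl hv, (exists_mem_of_mem_reroute he hv hy).2]
    exact ⟨(v, c), Finset.mem_filter.2 ⟨hvc, rfl, hc⟩⟩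
  rw [outDeg_eq_card_add_card _ v (· ∈ a :: l), outDeg_eq_card_add_card H v (· ∈ a :: l), hout]
  gcongr ?_ + _
  rcases Finset.eq_empty_or_nonempty
    ((reroute H a l).filter fun e => e.1 = v ∧ e.2 ∈ a :: l) with h | h
  · rw [h, Finset.card_empty]
    exact Nat.zero_le _
  · exact hin_le_one.trans (Finset.card_pos.2 (hin_pos h))

theorem exists_endpoint_reroute_iff (hp : ListsSCC H a (a :: l)) (hnd : (a :: l).Nodup)
    (hl : l ≠ []) (v : V) :
    (∃ e ∈ reroute H a l, e.1 = v ∨ e.2 = v) ↔ ∃ e ∈ H, e.1 = v ∨ e.2 = v := by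
  by_cases hv : v ∈ a :: l
  · obtain ⟨⟨x, y⟩, he, hxy⟩ := exists_mem_listEdges_of_mem hl hv
    obtain ⟨c, -, hvc⟩ := exists_mem_adj_of_mem hp hnd hl hv
    exact iff_of_true ⟨(x, y), mem_reroute.2 (.inr (.inl he)), hxy⟩ ⟨(v, c), hvc, .inl rfl⟩
  constructor
  · rintro ⟨⟨x, y⟩, he, hxy⟩
    rcases mem_reroute.1 he with ⟨h, -⟩ | h | ⟨-, rfl, c, -, hxc⟩
    · exact ⟨_, h, hxy⟩
    · obtain ⟨hx, hy⟩ := mem_of_mem_listEdges h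
      rcases hxy with rfl | rfl <;> contradiction
    · rcases hxy with rfl | rfl
      exacts [⟨(x, c), hxc, .inl rfl⟩, absurd List.mem_cons_self hv]
  · rintro ⟨⟨x, y⟩, he, hxy⟩
    by_cases hy : y ∈ a :: l
    · obtain rfl : x = v := hxy.resolve_right fun h => hv (h ▸ hy)
      exact ⟨(x, a), mem_reroute.2 (.inr (.inr ⟨hv, rfl, y, hy, he⟩)), .inl rfl⟩
    · exact ⟨(x, y), mem_reroute.2 (.inl ⟨he, hy⟩), hxy⟩

theorem tcAdj_of_mem_reroute {D : Finset (V × V)} (hH : ∀ e ∈ H, TCAdj D e.1 e.2)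
    (hp : ListsSCC H a (a :: l)) (hnd : (a :: l).Nodup) {x y : V}
    (h : (x, y) ∈ reroute H a l) : TCAdj D x y := by
  refine ⟨?_, reflTransGen_closed (fun u v huv => (hH (u, v) huv).2) _ _
    (reflTransGen_reroute_le hp _ _ (.single h))⟩
  rcases mem_reroute.1 h with ⟨h, -⟩ | h | ⟨hx, rfl, -⟩
  · exact (hH _ h).1
  · exact ne_of_mem_listEdges hnd h
  · rintro rfl
    exact hx List.mem_cons_self

theorem RSPPSolution.reroute {D K : Finset (V × V)} {T : ℕ} (hH : RSPPSolution D K T H)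
    (hp : ListsSCC H a (a :: l)) (hnd : (a :: l).Nodup) (hl : l ≠ [])
    (hK : ∀ k ∈ K, k.1 ∉ a :: l) : RSPPSolution D K T (reroute H a l) := by
  refine ⟨fun e he => tcAdj_of_mem_reroute hH.1 hp hnd he,
    fun v => (outDeg_reroute_le hp hnd hl v).trans (hH.2.1 v), fun k hk => ?_⟩
  obtain ⟨_, hpath⟩ := hH.2.2 k hk
  exact exists_diPath_of_reflTransGen (reflTransGen_reroute_of_not_mem hpath.reflTransGen (hK k hk))

end Reroute

theorem List.exists_nodup_cons_forall_mem_iff {α : Type*} [Finite α] {P : α → Prop} {u : α}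
    (hu : P u) :
    ∃ l : List α, (u :: l).Nodup ∧ ∀ x, x ∈ u :: l ↔ P x := by
  let s := (Set.toFinite {x | x ≠ u ∧ P x}).toFinset
  refine ⟨s.toList, List.nodup_cons.2 ⟨by simp [s], s.nodup_toList⟩, fun x => ?_⟩
  by_cases hx : x = u
  · simp [hx, hu]
  · simp [s, hx]

theorem exists_reroute_of_sourceless_scc [Finite V] {D K : Finset (V × V)} {T : ℕ}
    {H : Finset (V × V)} (hH : RSPPSolution D K T H) {u v : V} (huv : u ≠ v)
    (huv' : ReflTransGen (Adj H) u v) (hvu : ReflTransGen (Adj H) v u)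
    (hK : ∀ k ∈ K, ReflTransGen (Adj H) u k.1 → ¬ReflTransGen (Adj H) k.1 u) :
    ∃ H' : Finset (V × V), RSPPSolution D K T H' ∧
      (∀ w, (∃ e ∈ H', e.1 = w ∨ e.2 = w) ↔ ∃ e ∈ H, e.1 = w ∨ e.2 = w) ∧
      (∀ w, outDeg H' w ≤ outDeg H w) ∧ ReflTransGen (Adj H') < ReflTransGen (Adj H) := by
  obtain ⟨l, hnd, hp⟩ := List.exists_nodup_cons_forall_mem_iff
    (P := fun x => ReflTransGen (Adj H) x u ∧ ReflTransGen (Adj H) u x) ⟨.refl, .refl⟩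
  have hl : l ≠ [] := by
    rintro rfl
    exact huv (List.mem_singleton.1 ((hp v).2 ⟨hvu, huv'⟩)).symm
  exact ⟨reroute H u l,
    hH.reroute hp hnd hl fun k hk hs => hK k hk ((hp _).1 hs).2 ((hp _).1 hs).1,
    exists_endpoint_reroute_iff hp hnd hl, outDeg_reroute_le hp hnd hl,
    reflTransGen_reroute_lt hp hnd hl⟩

theorem mdrspp_scc_sources_general {V : Type*} [Fintype V] [DecidableEq V]
    (D K : Finset (V × V)) (T : ℕ)
    (H : Finset (V × V)) (hH : RSPPSolution D K T H) :
    ∃ H' : Finset (V × V), RSPPSolution D K T H' ∧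
      (∀ v : V, (∃ e ∈ H', e.1 = v ∨ e.2 = v) ↔ (∃ e ∈ H, e.1 = v ∨ e.2 = v)) ∧
      (∀ v : V, outDeg H' v ≤ outDeg H v) ∧
      (∀ u v : V, u ≠ v →
        Relation.ReflTransGen (Adj H') u v → Relation.ReflTransGen (Adj H') v u →
        ∃ k ∈ K, Relation.ReflTransGen (Adj H') u k.1 ∧
          Relation.ReflTransGen (Adj H') k.1 u) := by
  induction H using (InvImage.wf (fun H : Finset (V × V) => ReflTransGen (Adj H))
    wellFounded_lt).induction with
  | _ H ih =>
    by_cases hgood : ∀ u v : V, u ≠ v → ReflTransGen (Adj H) u v → ReflTransGen (Adj H) v u →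
        ∃ k ∈ K, ReflTransGen (Adj H) u k.1 ∧ ReflTransGen (Adj H) k.1 u
    · exact ⟨H, hH, fun _ => Iff.rfl, fun _ => le_rfl, hgood⟩
    push Not at hgood
    obtain ⟨u, v, huv, huv', hvu, hK⟩ := hgood
    obtain ⟨H₁, hH₁, hends₁, hdeg₁, hlt⟩ := exists_reroute_of_sourceless_scc hH huv huv' hvu hK
    obtain ⟨H', hH', hends', hdeg', hscc'⟩ := ih H₁ hlt hH₁
    exact ⟨H', hH', fun w => (hends' w).trans (hends₁ w),
      fun w => (hdeg' w).trans (hdeg₁ w), hscc'⟩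

/-- Let `S` be the set of sources of commodities of the
MD-RSPP instance `(D,K,T)`. If `H` is a solution graph of `(D,K,T)`, then there
is a solution graph `H'` with the same vertex set (the same set of vertices
incident to an edge), in which every vertex has outdegree at most its outdegree
in `H`, and in which every strongly connected component with at least two
vertices contains a source: whenever `u ≠ v` are mutually reachable in `H'`,
some source of a commodity is in the strongly connected component of `u`. -/
theorem mdrspp_scc_sources {V : Type*} [Fintype V] [DecidableEq V]
    (D K : Finset (V × V)) (T : ℕ)
    (hD : IsDigraph D)
    (H : Finset (V × V)) (hH : RSPPSolution D K T H) :
    ∃ H' : Finset (V × V), RSPPSolution D K T H' ∧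
      (∀ v : V, (∃ e ∈ H', e.1 = v ∨ e.2 = v) ↔ (∃ e ∈ H, e.1 = v ∨ e.2 = v)) ∧
      (∀ v : V, outDeg H' v ≤ outDeg H v) ∧
      (∀ u v : V, u ≠ v →
        Relation.ReflTransGen (Adj H') u v → Relation.ReflTransGen (Adj H') v u →
        ∃ k ∈ K, Relation.ReflTransGen (Adj H') u k.1 ∧
          Relation.ReflTransGen (Adj H') k.1 u) :=
  mdrspp_scc_sources_general D K T H hH
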